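/- arXiv:2105.13206 — 2 statements merged into one kernel-verified Lean document; each statement's English description precedes it below -/
import Mathlib

section
/- Let R, n be positive integers, q_A, q_D ∈ [0,1), and let Δ be an n×n real symmetric positive semidefinite matrix. For each k ∈ {1,…,R} and ℓ ∈ {1,2,3}, let A_{ℓ,k} be an n×n real symmetric matrix, D_{ℓ,k} an n×n real diagonal matrix, and a⁰_{ℓ,k} > 0, d⁰_{ℓ,k} > 0 real constants satisfying (1−q_A)·a⁰_{ℓ,k}•Δ ≼ A_{ℓ,k} ≼ (1+q_A)·a⁰_{ℓ,k}•Δ and (1−q_D)·d⁰_{ℓ,k}•I ≼ D_{ℓ,k} ≼ (1+q_D)·d⁰_{ℓ,k}•I. Define A := Σ_{k=1}^R ( A_{1,k}⊗D_{2,k}⊗D_{3,k} + D_{1,k}⊗A_{2,k}⊗D_{3,k} + D_{1,k}⊗D_{2,k}⊗A_{3,k} ), the anisotropy factors a_ℓ⁰ := Σ_{k=1}^R a⁰_{ℓ,k} · ∏_{m∈{1,2,3}, m≠ℓ} d⁰_{m,k}, and A₁ := a₁⁰•(Δ⊗I⊗I) + a₂⁰•(I⊗Δ⊗I) + a₃⁰•(I⊗I⊗Δ).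 Then (1−q_A)(1−q_D)²•A₁ ≼ A ≼ (1+q_A)(1+q_D)²•A₁. (Lemma 3.1, estimate (3.6) for the anisotropic-Laplacian preconditioner matrix A₁, case d = 3.) -/
/-!
Each summand of `A` is a threefold Kronecker product whose factors are sandwiched between scalar
multiples of `Δ` and `I`. Since Kronecker products of positive semidefinite matrices are positive
semidefinite, the Kronecker product is monotone in each factor on the positive cone, so these
sandwiches multiply; summing over `k` and collecting the scalars produces the anisotropy factors.
-/

open Matrix Kronecker
open scoped MatrixOrder

namespace Matrix

variable {𝕜 l m n : Type*} [RCLike 𝕜] [Finite l] [Finite m] [Finite n]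

theorem kronecker_nonneg {X : Matrix m m 𝕜} {Y : Matrix n n 𝕜} (hX : 0 ≤ X) (hY : 0 ≤ Y) :
    0 ≤ X ⊗ₖ Y :=
  (hX.posSemidef.kronecker hY.posSemidef).nonneg

theorem kronecker_le_kronecker_left {X X' : Matrix m m 𝕜} {Y : Matrix n n 𝕜} (hY : 0 ≤ Y)
    (hX : X ≤ X') : X ⊗ₖ Y ≤ X' ⊗ₖ Y := by
  rw [le_iff, sub_eq_of_eq_add (by rw [← add_kronecker, sub_add_cancel])]
  exact (le_iff.mp hX).kronecker hY.posSemidef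

theorem kronecker_le_kronecker_right {X : Matrix m m 𝕜} {Y Y' : Matrix n n 𝕜} (hX : 0 ≤ X)
    (hY : Y ≤ Y') : X ⊗ₖ Y ≤ X ⊗ₖ Y' := by
  rw [le_iff, sub_eq_of_eq_add (by rw [← kronecker_add, sub_add_cancel])]
  exact hX.posSemidef.kronecker (le_iff.mp hY)

theorem kronecker_le_kronecker {X X' : Matrix m m 𝕜} {Y Y' : Matrix n n 𝕜}
    (hX₀ : 0 ≤ X) (hX : X ≤ X') (hY₀ : 0 ≤ Y) (hY : Y ≤ Y') : X ⊗ₖ Y ≤ X' ⊗ₖ Y' :=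
  (kronecker_le_kronecker_right hX₀ hY).trans (kronecker_le_kronecker_left (hY₀.trans hY) hX)

end Matrix

section WeightedKroneckerSum

variable {α l m n : Type*}

/-- The shape of the `k`-th summand of `A`, with `Xᵢ = A_{i,k}` and `Yᵢ = D_{i,k}`; for `Yᵢ = I`
it is the Kronecker sum of the `Xᵢ`. -/
def weightedKroneckerSum [Mul α] [Add α] (X₁ : Matrix l l α) (X₂ : Matrix m m α)
    (X₃ : Matrix n n α) (Y₁ : Matrix l l α) (Y₂ : Matrix m m α) (Y₃ : Matrix n n α) :
    Matrix ((l × m) × n) ((l × m) × n) α :=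
  X₁ ⊗ₖ Y₂ ⊗ₖ Y₃ + Y₁ ⊗ₖ X₂ ⊗ₖ Y₃ + Y₁ ⊗ₖ Y₂ ⊗ₖ X₃

theorem weightedKroneckerSum_mono {𝕜 : Type*} [RCLike 𝕜] [Finite l] [Finite m] [Finite n]
    {X₁ X₁' Y₁ Y₁' : Matrix l l 𝕜} {X₂ X₂' Y₂ Y₂' : Matrix m m 𝕜}
    {X₃ X₃' Y₃ Y₃' : Matrix n n 𝕜}
    (hX₁₀ : 0 ≤ X₁) (hX₂₀ : 0 ≤ X₂) (hX₃₀ : 0 ≤ X₃) (hY₁₀ : 0 ≤ Y₁) (hY₂₀ : 0 ≤ Y₂)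
    (hY₃₀ : 0 ≤ Y₃) (hX₁ : X₁ ≤ X₁') (hX₂ : X₂ ≤ X₂') (hX₃ : X₃ ≤ X₃') (hY₁ : Y₁ ≤ Y₁')
    (hY₂ : Y₂ ≤ Y₂') (hY₃ : Y₃ ≤ Y₃') :
    weightedKroneckerSum X₁ X₂ X₃ Y₁ Y₂ Y₃ ≤ weightedKroneckerSum X₁' X₂' X₃' Y₁' Y₂' Y₃' := by
  refine add_le_add (add_le_add ?_ ?_) ?_ <;>
    refine kronecker_le_kronecker (kronecker_nonneg ?_ ?_)
      (kronecker_le_kronecker ?_ ?_ ?_ ?_) ?_ ?_ <;> assumption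

theorem sum_weightedKroneckerSum_smul [CommSemiring α] {ι : Type*} [Fintype ι]
    (s t : α) (a₁ a₂ a₃ d₁ d₂ d₃ : ι → α) (X Y : Matrix n n α) :
    ∑ k, weightedKroneckerSum ((s * a₁ k) • X) ((s * a₂ k) • X) ((s * a₃ k) • X)
        ((t * d₁ k) • Y) ((t * d₂ k) • Y) ((t * d₃ k) • Y) =
      (s * t ^ 2) • ((∑ k, a₁ k * (d₂ k * d₃ k)) • (X ⊗ₖ Y ⊗ₖ Y)
        + (∑ k, a₂ k * (d₁ k * d₃ k)) • (Y ⊗ₖ X ⊗ₖ Y)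
        + (∑ k, a₃ k * (d₁ k * d₂ k)) • (Y ⊗ₖ Y ⊗ₖ X)) := by
  simp only [weightedKroneckerSum, smul_kronecker, kronecker_smul, smul_smul,
    Finset.sum_add_distrib, Finset.sum_smul, Finset.smul_sum, smul_add]
  refine congrArg₂ (· + ·) (congrArg₂ (· + ·) ?_ ?_) ?_ <;>
    exact Finset.sum_congr rfl fun k _ => by congr 1; ring

end WeightedKroneckerSum

theorem stmt_5_general {R n : ℕ}
    (qA qD : ℝ) (hqA1 : qA < 1) (hqD1 : qD < 1)
    (Δ : Matrix (Fin n) (Fin n) ℝ) (hΔ : Δ.PosSemidef)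
    (A1 A2 A3 D1 D2 D3 : Fin R → Matrix (Fin n) (Fin n) ℝ)
    (a1 a2 a3 d1 d2 d3 : Fin R → ℝ)
    (ha1 : ∀ k, 0 < a1 k) (ha2 : ∀ k, 0 < a2 k) (ha3 : ∀ k, 0 < a3 k)
    (hd1 : ∀ k, 0 < d1 k) (hd2 : ∀ k, 0 < d2 k) (hd3 : ∀ k, 0 < d3 k)
    (hA1low : ∀ k, (A1 k - ((1 - qA) * a1 k) • Δ).PosSemidef)
    (hA1up : ∀ k, (((1 + qA) * a1 k) • Δ - A1 k).PosSemidef)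
    (hA2low : ∀ k, (A2 k - ((1 - qA) * a2 k) • Δ).PosSemidef)
    (hA2up : ∀ k, (((1 + qA) * a2 k) • Δ - A2 k).PosSemidef)
    (hA3low : ∀ k, (A3 k - ((1 - qA) * a3 k) • Δ).PosSemidef)
    (hA3up : ∀ k, (((1 + qA) * a3 k) • Δ - A3 k).PosSemidef)
    (hD1low : ∀ k, (D1 k - ((1 - qD) * d1 k) • (1 : Matrix (Fin n) (Fin n) ℝ)).PosSemidef)
    (hD1up : ∀ k, (((1 + qD) * d1 k) • (1 : Matrix (Fin n) (Fin n) ℝ) - D1 k).PosSemidef)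
    (hD2low : ∀ k, (D2 k - ((1 - qD) * d2 k) • (1 : Matrix (Fin n) (Fin n) ℝ)).PosSemidef)
    (hD2up : ∀ k, (((1 + qD) * d2 k) • (1 : Matrix (Fin n) (Fin n) ℝ) - D2 k).PosSemidef)
    (hD3low : ∀ k, (D3 k - ((1 - qD) * d3 k) • (1 : Matrix (Fin n) (Fin n) ℝ)).PosSemidef)
    (hD3up : ∀ k, (((1 + qD) * d3 k) • (1 : Matrix (Fin n) (Fin n) ℝ) - D3 k).PosSemidef)
    (A A₁ : Matrix ((Fin n × Fin n) × Fin n) ((Fin n × Fin n) × Fin n) ℝ)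
    (hA : A = ∑ k, (A1 k ⊗ₖ D2 k ⊗ₖ D3 k + D1 k ⊗ₖ A2 k ⊗ₖ D3 k + D1 k ⊗ₖ D2 k ⊗ₖ A3 k))
    (hA₁ : A₁ =
      (∑ k, a1 k * (d2 k * d3 k)) • (Δ ⊗ₖ (1 : Matrix (Fin n) (Fin n) ℝ) ⊗ₖ (1 : Matrix (Fin n) (Fin n) ℝ))
      + (∑ k, a2 k * (d1 k * d3 k)) • ((1 : Matrix (Fin n) (Fin n) ℝ) ⊗ₖ Δ ⊗ₖ (1 : Matrix (Fin n) (Fin n) ℝ))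
      + (∑ k, a3 k * (d1 k * d2 k)) • ((1 : Matrix (Fin n) (Fin n) ℝ) ⊗ₖ (1 : Matrix (Fin n) (Fin n) ℝ) ⊗ₖ Δ)) :
    (A - ((1 - qA) * (1 - qD) ^ 2) • A₁).PosSemidef ∧
    (((1 + qA) * (1 + qD) ^ 2) • A₁ - A).PosSemidef := by
  have hΔ_smul (a : Fin R → ℝ) (ha : ∀ k, 0 < a k) (k : Fin R) : 0 ≤ ((1 - qA) * a k) • Δ :=
    smul_nonneg (mul_nonneg (by linarith) (ha k).le) hΔ.nonneg
  have hI_smul (d : Fin R → ℝ) (hd : ∀ k, 0 < d k) (k : Fin R) :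
      0 ≤ ((1 - qD) * d k) • (1 : Matrix (Fin n) (Fin n) ℝ) :=
    smul_nonneg (mul_nonneg (by linarith) (hd k).le) zero_le_one
  subst hA hA₁
  rw [← le_iff, ← le_iff, ← sum_weightedKroneckerSum_smul, ← sum_weightedKroneckerSum_smul]
  constructor <;> refine Finset.sum_le_sum fun k _ => ?_
  · exact weightedKroneckerSum_mono (hΔ_smul a1 ha1 k) (hΔ_smul a2 ha2 k) (hΔ_smul a3 ha3 k)
      (hI_smul d1 hd1 k) (hI_smul d2 hd2 k) (hI_smul d3 hd3 k)
      (hA1low k) (hA2low k) (hA3low k) (hD1low k) (hD2low k) (hD3low k)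
  · exact weightedKroneckerSum_mono ((hΔ_smul a1 ha1 k).trans (hA1low k))
      ((hΔ_smul a2 ha2 k).trans (hA2low k)) ((hΔ_smul a3 ha3 k).trans (hA3low k))
      ((hI_smul d1 hd1 k).trans (hD1low k)) ((hI_smul d2 hd2 k).trans (hD2low k))
      ((hI_smul d3 hd3 k).trans (hD3low k))
      (hA1up k) (hA2up k) (hA3up k) (hD1up k) (hD2up k) (hD3up k)

/-- Lemma 3.1, estimate (3.6) for the anisotropic-Laplacian preconditioner matrix
`A₁`, case `d = 3`: for symmetric `A_{ℓ,k}` spectrally equivalent to a symmetric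
positive semidefinite `Δ`, i.e. `(1−q_A)·a⁰_{ℓ,k}•Δ ≼ A_{ℓ,k} ≼ (1+q_A)·a⁰_{ℓ,k}•Δ`,
and diagonal `D_{ℓ,k}` with `(1−q_D)·d⁰_{ℓ,k}•I ≼ D_{ℓ,k} ≼ (1+q_D)·d⁰_{ℓ,k}•I`,
with anisotropy factors `a_ℓ⁰ = Σ_k a⁰_{ℓ,k}·∏_{m≠ℓ} d⁰_{m,k}`, one has
`(1−q_A)(1−q_D)²•A₁ ≼ A ≼ (1+q_A)(1+q_D)²•A₁` in the Loewner order. -/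
theorem stmt_5 {R n : ℕ} (hR : 0 < R) (hn : 0 < n)
    (qA qD : ℝ) (hqA0 : 0 ≤ qA) (hqA1 : qA < 1) (hqD0 : 0 ≤ qD) (hqD1 : qD < 1)
    (Δ : Matrix (Fin n) (Fin n) ℝ) (hΔ : Δ.PosSemidef)
    (A1 A2 A3 D1 D2 D3 : Fin R → Matrix (Fin n) (Fin n) ℝ)
    (a1 a2 a3 d1 d2 d3 : Fin R → ℝ)
    (hA1sym : ∀ k, (A1 k).IsHermitian) (hA2sym : ∀ k, (A2 k).IsHermitian)
    (hA3sym : ∀ k, (A3 k).IsHermitian)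
    (hD1diag : ∀ k, (D1 k).IsDiag) (hD2diag : ∀ k, (D2 k).IsDiag)
    (hD3diag : ∀ k, (D3 k).IsDiag)
    (ha1 : ∀ k, 0 < a1 k) (ha2 : ∀ k, 0 < a2 k) (ha3 : ∀ k, 0 < a3 k)
    (hd1 : ∀ k, 0 < d1 k) (hd2 : ∀ k, 0 < d2 k) (hd3 : ∀ k, 0 < d3 k)
    (hA1low : ∀ k, (A1 k - ((1 - qA) * a1 k) • Δ).PosSemidef)
    (hA1up : ∀ k, (((1 + qA) * a1 k) • Δ - A1 k).PosSemidef)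
    (hA2low : ∀ k, (A2 k - ((1 - qA) * a2 k) • Δ).PosSemidef)
    (hA2up : ∀ k, (((1 + qA) * a2 k) • Δ - A2 k).PosSemidef)
    (hA3low : ∀ k, (A3 k - ((1 - qA) * a3 k) • Δ).PosSemidef)
    (hA3up : ∀ k, (((1 + qA) * a3 k) • Δ - A3 k).PosSemidef)
    (hD1low : ∀ k, (D1 k - ((1 - qD) * d1 k) • (1 : Matrix (Fin n) (Fin n) ℝ)).PosSemidef)
    (hD1up : ∀ k, (((1 + qD) * d1 k) • (1 : Matrix (Fin n) (Fin n) ℝ) - D1 k).PosSemidef)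
    (hD2low : ∀ k, (D2 k - ((1 - qD) * d2 k) • (1 : Matrix (Fin n) (Fin n) ℝ)).PosSemidef)
    (hD2up : ∀ k, (((1 + qD) * d2 k) • (1 : Matrix (Fin n) (Fin n) ℝ) - D2 k).PosSemidef)
    (hD3low : ∀ k, (D3 k - ((1 - qD) * d3 k) • (1 : Matrix (Fin n) (Fin n) ℝ)).PosSemidef)
    (hD3up : ∀ k, (((1 + qD) * d3 k) • (1 : Matrix (Fin n) (Fin n) ℝ) - D3 k).PosSemidef)
    (A A₁ : Matrix ((Fin n × Fin n) × Fin n) ((Fin n × Fin n) × Fin n) ℝ)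
    (hA : A = ∑ k, (A1 k ⊗ₖ D2 k ⊗ₖ D3 k + D1 k ⊗ₖ A2 k ⊗ₖ D3 k + D1 k ⊗ₖ D2 k ⊗ₖ A3 k))
    (hA₁ : A₁ =
      (∑ k, a1 k * (d2 k * d3 k)) • (Δ ⊗ₖ (1 : Matrix (Fin n) (Fin n) ℝ) ⊗ₖ (1 : Matrix (Fin n) (Fin n) ℝ))
      + (∑ k, a2 k * (d1 k * d3 k)) • ((1 : Matrix (Fin n) (Fin n) ℝ) ⊗ₖ Δ ⊗ₖ (1 : Matrix (Fin n) (Fin n) ℝ))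
      + (∑ k, a3 k * (d1 k * d2 k)) • ((1 : Matrix (Fin n) (Fin n) ℝ) ⊗ₖ (1 : Matrix (Fin n) (Fin n) ℝ) ⊗ₖ Δ)) :
    (A - ((1 - qA) * (1 - qD) ^ 2) • A₁).PosSemidef ∧
    (((1 + qA) * (1 + qD) ^ 2) • A₁ - A).PosSemidef :=
  stmt_5_general qA qD hqA1 hqD1 Δ hΔ A1 A2 A3 D1 D2 D3 a1 a2 a3 d1 d2 d3 ha1 ha2 ha3 hd1 hd2 hd3
    hA1low hA1up hA2low hA2up hA3low hA3up hD1low hD1up hD2low hD2up hD3low hD3up A A₁ hA hA₁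
end

section
/- Let d ≥ 2 be a natural number, q_A, q_D ∈ [0,1), and set c := (1−q_A)(1−q_D)^{d−1} and C := (1+q_A)(1+q_D)^{d−1}. Let A and P be n×n real symmetric positive definite matrices satisfying c•P ≼ A ≼ C•P in the Loewner order. Then min{C⁻¹, c}•(P + P⁻¹) ≼ A + A⁻¹ ≼ max{C, c⁻¹}•(P + P⁻¹); consequently the generalized condition number of (P + P⁻¹)⁻¹(A + A⁻¹) is at most max{(1+q_A)(1+q_D)^{d−1}, (1−q_A)⁻¹(1−q_D)^{1−d}} / min{(1+q_A)⁻¹(1+q_D)^{1−d}, (1−q_A)(1−q_D)^{d−1}}, uniformly in n. (Theorem 3.2, bound (3.10) for the preconditioner B₁ = A₁ + A₁⁻¹.) -/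
open Matrix

/-- Generalized condition number of the pencil `(M, N)`: the ratio of the largest
to the smallest generalized Rayleigh quotient `(xᵀMx)/(xᵀNx)` over nonzero `x`. -/
noncomputable def genCond {n : ℕ} (M N : Matrix (Fin n) (Fin n) ℝ) : ℝ :=
  sSup {r : ℝ | ∃ x : Fin n → ℝ, x ≠ 0 ∧ r = (x ⬝ᵥ M *ᵥ x) / (x ⬝ᵥ N *ᵥ x)} /
  sInf {r : ℝ | ∃ x : Fin n → ℝ, x ≠ 0 ∧ r = (x ⬝ᵥ M *ᵥ x) / (x ⬝ᵥ N *ᵥ x)}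

/-! The map `X ↦ X⁻¹` is antitone on positive definite matrices: for `A ≤ B` the difference
`A⁻¹ - B⁻¹` is a sum of two congruences of positive semidefinite matrices. Hence `c • P ≤ A ≤ C • P`
gives `C⁻¹ • P⁻¹ ≤ A⁻¹ ≤ c⁻¹ • P⁻¹`, and adding the two chains bounds `A + A⁻¹` between
`min C⁻¹ c • (P + P⁻¹)` and `max C c⁻¹ • (P + P⁻¹)`. A two-sided Loewner bound `a • N ≤ M ≤ b • N`
traps every generalized Rayleigh quotient in `[a, b]`, which bounds the condition number by
`b / a`. -/

open scoped MatrixOrder ComplexOrder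

namespace Matrix

variable {ι : Type*}

theorem smul_inv₀ [Fintype ι] [DecidableEq ι] {K : Type*} [Field K] (r : K)
    (A : Matrix ι ι K) : (r • A)⁻¹ = r⁻¹ • A⁻¹ := by
  rcases eq_or_ne r 0 with rfl | hr
  · simp
  by_cases hA : IsUnit A.det
  · exact inv_smul' A (Units.mk0 r hr) hA
  · have hrA : ¬IsUnit (r • A).det := by simpa [det_smul, hr] using hA
    rw [nonsing_inv_apply_not_isUnit _ hA, nonsing_inv_apply_not_isUnit _ hrA, smul_zero]

theorem PosDef.inv_le_inv_of_le [Fintype ι] [DecidableEq ι] {𝕜 : Type*} [RCLike 𝕜]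
    {A B : Matrix ι ι 𝕜} (hA : A.PosDef) (hAB : A ≤ B) : B⁻¹ ≤ A⁻¹ := by
  have hB : B.PosDef := by simpa using hA.add_posSemidef hAB
  have : Invertible A := hA.isUnit.invertible
  have : Invertible B := hB.isUnit.invertible
  have key : A⁻¹ - B⁻¹ = (B⁻¹ - A⁻¹)ᴴ * A * (B⁻¹ - A⁻¹) + (B⁻¹)ᴴ * (B - A) * B⁻¹ := by
    rw [conjTranspose_sub, hB.isHermitian.inv.eq, hA.isHermitian.inv.eq]
    simp only [Matrix.sub_mul, Matrix.mul_sub, Matrix.mul_assoc, Matrix.mul_inv_of_invertible,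
      Matrix.inv_mul_of_invertible, Matrix.mul_one, Matrix.one_mul]
    abel
  rw [le_iff, key]
  exact (hA.posSemidef.conjTranspose_mul_mul_same _).add (hAB.conjTranspose_mul_mul_same _)

theorem PosDef.smul_inv_le_inv [Fintype ι] [DecidableEq ι] {A P : Matrix ι ι ℝ} {b : ℝ}
    (hA : A.PosDef) (h : A ≤ b • P) : b⁻¹ • P⁻¹ ≤ A⁻¹ := by
  simpa [smul_inv₀] using hA.inv_le_inv_of_le h

theorem PosDef.inv_le_inv_smul [Fintype ι] [DecidableEq ι] {A P : Matrix ι ι ℝ} {a : ℝ}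
    (hP : P.PosDef) (ha : 0 < a) (h : a • P ≤ A) : A⁻¹ ≤ a⁻¹ • P⁻¹ := by
  simpa [smul_inv₀] using (hP.smul ha).inv_le_inv_of_le h

theorem min_smul_add_le {X Y : Matrix ι ι ℝ} (hX : X.PosSemidef) (hY : Y.PosSemidef) (a b : ℝ) :
    min a b • (X + Y) ≤ a • X + b • Y := by
  rw [le_iff, show a • X + b • Y - min a b • (X + Y) = (a - min a b) • X + (b - min a b) • Y by
    simp only [smul_add, sub_smul]; abel]
  exact (hX.smul (sub_nonneg.2 (min_le_left a b))).add (hY.smul (sub_nonneg.2 (min_le_right a b)))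

theorem smul_add_le_max_smul {X Y : Matrix ι ι ℝ} (hX : X.PosSemidef) (hY : Y.PosSemidef)
    (a b : ℝ) : a • X + b • Y ≤ max a b • (X + Y) := by
  rw [le_iff, show max a b • (X + Y) - (a • X + b • Y) = (max a b - a) • X + (max a b - b) • Y by
    simp only [smul_add, sub_smul]; abel]
  exact (hX.smul (sub_nonneg.2 (le_max_left a b))).add (hY.smul (sub_nonneg.2 (le_max_right a b)))

theorem add_inv_mem_Icc_of_smul_le_of_le_smul [Fintype ι] [DecidableEq ι] {A P : Matrix ι ι ℝ}
    {a b : ℝ} (hP : P.PosDef) (ha : 0 < a) (hlow : a • P ≤ A) (hup : A ≤ b • P) :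
    A + A⁻¹ ∈ Set.Icc (min b⁻¹ a • (P + P⁻¹)) (max b a⁻¹ • (P + P⁻¹)) := by
  have hA : A.PosDef := by simpa using (hP.smul ha).add_posSemidef hlow
  constructor
  · calc min b⁻¹ a • (P + P⁻¹) = min a b⁻¹ • (P + P⁻¹) := by rw [min_comm]
      _ ≤ a • P + b⁻¹ • P⁻¹ := min_smul_add_le hP.posSemidef hP.inv.posSemidef a b⁻¹
      _ ≤ A + A⁻¹ := add_le_add hlow (hA.smul_inv_le_inv hup)
  · calc A + A⁻¹ ≤ b • P + a⁻¹ • P⁻¹ := add_le_add hup (hP.inv_le_inv_smul ha hlow)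
      _ ≤ max b a⁻¹ • (P + P⁻¹) := smul_add_le_max_smul hP.posSemidef hP.inv.posSemidef b a⁻¹

theorem dotProduct_mulVec_le_of_le [Fintype ι] {X Y : Matrix ι ι ℝ} (h : X ≤ Y) (x : ι → ℝ) :
    x ⬝ᵥ X *ᵥ x ≤ x ⬝ᵥ Y *ᵥ x := by
  simpa [sub_mulVec, dotProduct_sub] using (le_iff.mp h).dotProduct_mulVec_nonneg x

theorem div_dotProduct_mulVec_mem_Icc [Fintype ι] {M N : Matrix ι ι ℝ} {a b : ℝ}
    (hN : N.PosDef) (hlow : a • N ≤ M) (hup : M ≤ b • N) {x : ι → ℝ} (hx : x ≠ 0) :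
    (x ⬝ᵥ M *ᵥ x) / (x ⬝ᵥ N *ᵥ x) ∈ Set.Icc a b := by
  have hpos : 0 < x ⬝ᵥ N *ᵥ x := by simpa using hN.dotProduct_mulVec_pos hx
  constructor
  · rw [le_div_iff₀ hpos]
    simpa [smul_mulVec] using dotProduct_mulVec_le_of_le hlow x
  · rw [div_le_iff₀ hpos]
    simpa [smul_mulVec] using dotProduct_mulVec_le_of_le hup x

end Matrix

theorem genCond_le_div_of_smul_le_of_le_smul {n : ℕ} {M N : Matrix (Fin n) (Fin n) ℝ} {a b : ℝ}
    (hN : N.PosDef) (ha : 0 < a) (hb : 0 ≤ b) (hlow : a • N ≤ M) (hup : M ≤ b • N) :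
    genCond M N ≤ b / a := by
  unfold genCond
  set S := {r : ℝ | ∃ x : Fin n → ℝ, x ≠ 0 ∧ r = (x ⬝ᵥ M *ᵥ x) / (x ⬝ᵥ N *ᵥ x)}
  have hS : S ⊆ Set.Icc a b := by
    rintro _ ⟨x, hx, rfl⟩
    exact div_dotProduct_mulVec_mem_Icc hN hlow hup hx
  -- `S` is empty only for `n = 0`; then `sInf S = 0` and `genCond` is the junk value `0`.
  rcases S.eq_empty_or_nonempty with hempty | hne
  · rw [hempty, Real.sInf_empty, div_zero]
    positivity
  · exact div_le_div₀ hb (Real.sSup_le (fun r hr => (hS hr).2) hb) ha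
      (le_csInf hne fun r hr => (hS hr).1)

theorem stmt_10_general {n : ℕ} (d : ℕ)
    (qA qD : ℝ) (hqA0 : 0 ≤ qA) (hqA1 : qA < 1) (hqD0 : 0 ≤ qD) (hqD1 : qD < 1)
    (c C : ℝ) (hc : c = (1 - qA) * (1 - qD) ^ (d - 1))
    (hC : C = (1 + qA) * (1 + qD) ^ (d - 1))
    (A P : Matrix (Fin n) (Fin n) ℝ) (hP : P.PosDef)
    (hlow : (A - c • P).PosSemidef) (hup : (C • P - A).PosSemidef) :
    ((A + A⁻¹) - min C⁻¹ c • (P + P⁻¹)).PosSemidef ∧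
    (max C c⁻¹ • (P + P⁻¹) - (A + A⁻¹)).PosSemidef ∧
    genCond (A + A⁻¹) (P + P⁻¹) ≤
      max ((1 + qA) * (1 + qD) ^ (d - 1)) ((1 - qA)⁻¹ * ((1 - qD) ^ (d - 1))⁻¹) /
        min ((1 + qA)⁻¹ * ((1 + qD) ^ (d - 1))⁻¹) ((1 - qA) * (1 - qD) ^ (d - 1)) := by
  have hc0 : 0 < c := hc ▸ mul_pos (by linarith) (pow_pos (by linarith) _)
  have hC0 : 0 < C := hC ▸ mul_pos (by linarith) (pow_pos (by linarith) _)
  obtain ⟨hlow', hup'⟩ := add_inv_mem_Icc_of_smul_le_of_le_smul hP hc0 hlow hup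
  refine ⟨hlow', hup', ?_⟩
  rw [← mul_inv, ← mul_inv, ← hc, ← hC]
  exact genCond_le_div_of_smul_le_of_le_smul (hP.add hP.inv) (lt_min (inv_pos.2 hC0) hc0)
    (hC0.le.trans (le_max_left _ _)) hlow' hup'

/-- Theorem 3.2, bound (3.10) for the preconditioner `B₁ = A₁ + A₁⁻¹`: with
`c = (1−q_A)(1−q_D)^{d−1}`, `C = (1+q_A)(1+q_D)^{d−1}` and `c•P ≼ A ≼ C•P` for
symmetric positive definite `A`, `P`, one has
`min{C⁻¹, c}•(P+P⁻¹) ≼ A+A⁻¹ ≼ max{C, c⁻¹}•(P+P⁻¹)`; consequently the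
generalized condition number of `(P+P⁻¹)⁻¹(A+A⁻¹)` is at most
`max{(1+q_A)(1+q_D)^{d−1}, (1−q_A)⁻¹(1−q_D)^{1−d}} /
 min{(1+q_A)⁻¹(1+q_D)^{1−d}, (1−q_A)(1−q_D)^{d−1}}`, uniformly in `n`. -/
theorem stmt_10 {n : ℕ} (d : ℕ) (hd : 2 ≤ d)
    (qA qD : ℝ) (hqA0 : 0 ≤ qA) (hqA1 : qA < 1) (hqD0 : 0 ≤ qD) (hqD1 : qD < 1)
    (c C : ℝ) (hc : c = (1 - qA) * (1 - qD) ^ (d - 1))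
    (hC : C = (1 + qA) * (1 + qD) ^ (d - 1))
    (A P : Matrix (Fin n) (Fin n) ℝ) (hA : A.PosDef) (hP : P.PosDef)
    (hlow : (A - c • P).PosSemidef) (hup : (C • P - A).PosSemidef) :
    ((A + A⁻¹) - min C⁻¹ c • (P + P⁻¹)).PosSemidef ∧
    (max C c⁻¹ • (P + P⁻¹) - (A + A⁻¹)).PosSemidef ∧
    genCond (A + A⁻¹) (P + P⁻¹) ≤
      max ((1 + qA) * (1 + qD) ^ (d - 1)) ((1 - qA)⁻¹ * ((1 - qD) ^ (d - 1))⁻¹) /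
        min ((1 + qA)⁻¹ * ((1 + qD) ^ (d - 1))⁻¹) ((1 - qA) * (1 - qD) ^ (d - 1)) :=
  stmt_10_general d qA qD hqA0 hqA1 hqD0 hqD1 c C hc hC A P hP hlow hup
end
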